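/- Let FS₁ > 0 and for a fixed t ≥ 2 suppose FS₁·Δ = RF_t + Σ_{k=2}^t Σ_{g ∈ G⁻_k} P(g)·Δ(g) - Σ_{k=2}^t Σ_{g ∈ G⁺_k} P(g)·Δ(g), where all P(g) ≥ 0, each Δ(g) ∈ [L_t, U_t] with L_t ≤ 0 ≤ U_t, Σ_{k,g∈G⁻_k} P(g) ≤ q₀ and Σ_{k,g∈G⁺_k} P(g) ≤ q₁. Then RF_t/FS₁ + q₀·L_t/FS₁ - q₁·U_t/FS₁ ≤ Δ ≤ RF_t/FS₁ + q₀·U_t/FS₁ - q₁·L_t/FS₁. -/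

import Mathlib

/-! Each contamination term is a sum of effects `Δ(g) ∈ [L_t, U_t]` with nonnegative weights of
total mass at most `q`, so, as `L_t ≤ 0 ≤ U_t`, it lies in `[q L_t, q U_t]`. Inserting these
bounds into the identity for `FS₁ Δ` and dividing by `FS₁ > 0` gives the interval for `Δ`. -/

section WeightedSum

variable {R α β : Type*} [Ring R] [PartialOrder R] [IsOrderedRing R]

theorem Finset.mul_le_sum_mul_of_sum_le {s : Finset α} {w x : α → R} {L q : R}
    (hL : L ≤ 0) (hw : ∀ i ∈ s, 0 ≤ w i) (hx : ∀ i ∈ s, L ≤ x i)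
    (hq : ∑ i ∈ s, w i ≤ q) : q * L ≤ ∑ i ∈ s, w i * x i :=
  calc q * L ≤ (∑ i ∈ s, w i) * L := mul_le_mul_of_nonpos_right hq hL
    _ = ∑ i ∈ s, w i * L := Finset.sum_mul ..
    _ ≤ ∑ i ∈ s, w i * x i :=
      Finset.sum_le_sum fun i hi => mul_le_mul_of_nonneg_left (hx i hi) (hw i hi)

theorem Finset.sum_mul_le_mul_of_sum_le {s : Finset α} {w x : α → R} {U q : R}
    (hU : 0 ≤ U) (hw : ∀ i ∈ s, 0 ≤ w i) (hx : ∀ i ∈ s, x i ≤ U)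
    (hq : ∑ i ∈ s, w i ≤ q) : ∑ i ∈ s, w i * x i ≤ q * U :=
  calc ∑ i ∈ s, w i * x i ≤ ∑ i ∈ s, w i * U :=
      Finset.sum_le_sum fun i hi => mul_le_mul_of_nonneg_left (hx i hi) (hw i hi)
    _ = (∑ i ∈ s, w i) * U := (Finset.sum_mul ..).symm
    _ ≤ q * U := mul_le_mul_of_nonneg_right hq hU

theorem Finset.sum_sum_mul_mem_Icc {s : Finset β} {G : β → Finset α} {w x : α → R}
    {L U q : R} (hL : L ≤ 0) (hU : 0 ≤ U) (hw : ∀ k ∈ s, ∀ g ∈ G k, 0 ≤ w g)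
    (hx : ∀ k ∈ s, ∀ g ∈ G k, L ≤ x g ∧ x g ≤ U)
    (hq : ∑ k ∈ s, ∑ g ∈ G k, w g ≤ q) :
    ∑ k ∈ s, ∑ g ∈ G k, w g * x g ∈ Set.Icc (q * L) (q * U) := by
  rw [Finset.sum_sigma'] at hq ⊢
  have hw' : ∀ i ∈ s.sigma G, 0 ≤ w i.2 := fun i hi =>
    hw i.1 (Finset.mem_sigma.1 hi).1 i.2 (Finset.mem_sigma.1 hi).2
  have hx' : ∀ i ∈ s.sigma G, L ≤ x i.2 ∧ x i.2 ≤ U := fun i hi =>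
    hx i.1 (Finset.mem_sigma.1 hi).1 i.2 (Finset.mem_sigma.1 hi).2
  exact ⟨Finset.mul_le_sum_mul_of_sum_le hL hw' (fun i hi => (hx' i hi).1) hq,
    Finset.sum_mul_le_mul_of_sum_le hU hw' (fun i hi => (hx' i hi).2) hq⟩

end WeightedSum

theorem stmt_10_general {ι : Type} (t : ℕ)
    (Gneg Gpos : ℕ → Finset ι) (P Δg : ι → ℝ)
    (FS1 RFt Δ Lt Ut q0 q1 : ℝ)
    (hFS1 : 0 < FS1) (hL : Lt ≤ 0) (hU : 0 ≤ Ut)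
    (hPneg : ∀ k ∈ Finset.Icc 2 t, ∀ g ∈ Gneg k, 0 ≤ P g)
    (hPpos : ∀ k ∈ Finset.Icc 2 t, ∀ g ∈ Gpos k, 0 ≤ P g)
    (hΔneg : ∀ k ∈ Finset.Icc 2 t, ∀ g ∈ Gneg k, Lt ≤ Δg g ∧ Δg g ≤ Ut)
    (hΔpos : ∀ k ∈ Finset.Icc 2 t, ∀ g ∈ Gpos k, Lt ≤ Δg g ∧ Δg g ≤ Ut)
    (hq0 : ∑ k ∈ Finset.Icc 2 t, ∑ g ∈ Gneg k, P g ≤ q0)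
    (hq1 : ∑ k ∈ Finset.Icc 2 t, ∑ g ∈ Gpos k, P g ≤ q1)
    (hid : FS1 * Δ = RFt +
      ∑ k ∈ Finset.Icc 2 t, ∑ g ∈ Gneg k, P g * Δg g -
      ∑ k ∈ Finset.Icc 2 t, ∑ g ∈ Gpos k, P g * Δg g) :
    RFt / FS1 + q0 * Lt / FS1 - q1 * Ut / FS1 ≤ Δ ∧
    Δ ≤ RFt / FS1 + q0 * Ut / FS1 - q1 * Lt / FS1 := by
  obtain ⟨hneg_lower, hneg_upper⟩ := Finset.sum_sum_mul_mem_Icc hL hU hPneg hΔneg hq0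
  obtain ⟨hpos_lower, hpos_upper⟩ := Finset.sum_sum_mul_mem_Icc hL hU hPpos hΔpos hq1
  simp only [← add_div, ← sub_div]
  rw [div_le_iff₀ hFS1, le_div_iff₀ hFS1, mul_comm Δ]
  constructor <;> linarith

theorem stmt_10 {ι : Type} (t : ℕ) (ht : 2 ≤ t)
    (Gneg Gpos : ℕ → Finset ι) (P Δg : ι → ℝ)
    (FS1 RFt Δ Lt Ut q0 q1 : ℝ)
    (hFS1 : 0 < FS1) (hL : Lt ≤ 0) (hU : 0 ≤ Ut)
    (hPneg : ∀ k ∈ Finset.Icc 2 t, ∀ g ∈ Gneg k, 0 ≤ P g)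
    (hPpos : ∀ k ∈ Finset.Icc 2 t, ∀ g ∈ Gpos k, 0 ≤ P g)
    (hΔneg : ∀ k ∈ Finset.Icc 2 t, ∀ g ∈ Gneg k, Lt ≤ Δg g ∧ Δg g ≤ Ut)
    (hΔpos : ∀ k ∈ Finset.Icc 2 t, ∀ g ∈ Gpos k, Lt ≤ Δg g ∧ Δg g ≤ Ut)
    (hq0 : ∑ k ∈ Finset.Icc 2 t, ∑ g ∈ Gneg k, P g ≤ q0)
    (hq1 : ∑ k ∈ Finset.Icc 2 t, ∑ g ∈ Gpos k, P g ≤ q1)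
    (hid : FS1 * Δ = RFt +
      ∑ k ∈ Finset.Icc 2 t, ∑ g ∈ Gneg k, P g * Δg g -
      ∑ k ∈ Finset.Icc 2 t, ∑ g ∈ Gpos k, P g * Δg g) :
    RFt / FS1 + q0 * Lt / FS1 - q1 * Ut / FS1 ≤ Δ ∧
    Δ ≤ RFt / FS1 + q0 * Ut / FS1 - q1 * Lt / FS1 :=
  stmt_10_general t Gneg Gpos P Δg FS1 RFt Δ Lt Ut q0 q1 hFS1 hL hU hPneg hPpos hΔneg hΔpos hq0 hq1
    hid
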